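/- The ordered weighted ℓ₁ functional J_λ(b) = Σᵢ λᵢ |b|_[i], with λ₁ ≥ ... ≥ λ_m ≥ 0 and |b|_[1] ≥ ... ≥ |b|_[m] the decreasing rearrangement of the absolute values of b, is a norm on ℝ^m whenever λ₁ > 0. -/

import Mathlib

/-! The sorted vector `|b|_[·]` is a rearrangement of `|b|` that is antitone, like `λ`, so by the
rearrangement inequality `J_λ(b)` is the largest of the pairings `∑ λᵢ |b_{σ i}|` over all
permutations `σ`. Homogeneity and subadditivity hold for each single pairing, and therefore for
their maximum. Definiteness: `J_λ(b) ≥ λ₁ max |bⱼ|`. -/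

/-- The `i`-th largest of `|b 1|, ..., |b m|` (decreasing rearrangement of `|b|`). -/
noncomputable def sortedAbsDesc {m : ℕ} (b : Fin m → ℝ) (i : Fin m) : ℝ :=
  |b (Tuple.sort (fun k => |b k|) i.rev)|

/-- The ordered weighted ℓ₁ functional `J lam b = ∑ i, lam i * |b|_[i]`. -/
noncomputable def owl {m : ℕ} (lam : Fin m → ℝ) (b : Fin m → ℝ) : ℝ :=
  ∑ i, lam i * sortedAbsDesc b i

namespace OrderedWeightedL1

variable {m : ℕ}

noncomputable def descPerm (b : Fin m → ℝ) : Equiv.Perm (Fin m) :=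
  Fin.revPerm.trans (Tuple.sort fun k => |b k|)

lemma sortedAbsDesc_eq_abs_descPerm (b : Fin m → ℝ) (i : Fin m) :
    sortedAbsDesc b i = |b (descPerm b i)| := rfl

lemma sortedAbsDesc_antitone (b : Fin m → ℝ) : Antitone (sortedAbsDesc b) :=
  fun _ _ hij => Tuple.monotone_sort (fun k => |b k|) (Fin.rev_le_rev.mpr hij)

lemma abs_le_sortedAbsDesc_zero (hm : 0 < m) (b : Fin m → ℝ) (j : Fin m) :
    |b j| ≤ sortedAbsDesc b ⟨0, hm⟩ := by
  calc |b j| = sortedAbsDesc b ((descPerm b).symm j) := by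
        rw [sortedAbsDesc_eq_abs_descPerm, Equiv.apply_symm_apply]
    _ ≤ sortedAbsDesc b ⟨0, hm⟩ := sortedAbsDesc_antitone b (Nat.zero_le _)

variable (lam : Fin m → ℝ)

lemma owl_eq_sum_descPerm (b : Fin m → ℝ) :
    owl lam b = ∑ i, lam i * |b (descPerm b i)| := rfl

lemma sum_mul_abs_comp_perm_le_owl (hanti : Antitone lam) (b : Fin m → ℝ)
    (σ : Equiv.Perm (Fin m)) : ∑ i, lam i * |b (σ i)| ≤ owl lam b := by
  have h := (hanti.monovary (sortedAbsDesc_antitone b)).sum_mul_comp_perm_le_sum_mul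
    (σ := σ.trans (descPerm b).symm)
  simp only [sortedAbsDesc_eq_abs_descPerm, Equiv.trans_apply, Equiv.apply_symm_apply] at h
  exact h

lemma owl_mul_left (hanti : Antitone lam) (c : ℝ) (b : Fin m → ℝ) :
    owl lam (fun i => c * b i) = |c| * owl lam b := by
  have scale (σ : Equiv.Perm (Fin m)) :
      ∑ i, lam i * |c * b (σ i)| = |c| * ∑ i, lam i * |b (σ i)| := by
    rw [Finset.mul_sum]
    exact Finset.sum_congr rfl fun i _ => by rw [abs_mul]; ring
  apply le_antisymm
  · rw [owl_eq_sum_descPerm, scale]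
    exact mul_le_mul_of_nonneg_left (sum_mul_abs_comp_perm_le_owl lam hanti b _) (abs_nonneg c)
  · rw [owl_eq_sum_descPerm lam b, ← scale]
    exact sum_mul_abs_comp_perm_le_owl lam hanti (fun i => c * b i) _

lemma owl_add_le (hanti : Antitone lam) (hnonneg : ∀ i, 0 ≤ lam i) (b₁ b₂ : Fin m → ℝ) :
    owl lam (b₁ + b₂) ≤ owl lam b₁ + owl lam b₂ := by
  set σ := descPerm (b₁ + b₂)
  calc owl lam (b₁ + b₂) = ∑ i, lam i * |b₁ (σ i) + b₂ (σ i)| := rfl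
    _ ≤ ∑ i, (lam i * |b₁ (σ i)| + lam i * |b₂ (σ i)|) := Finset.sum_le_sum fun i _ => by
        rw [← mul_add]
        exact mul_le_mul_of_nonneg_left (abs_add_le _ _) (hnonneg i)
    _ = ∑ i, lam i * |b₁ (σ i)| + ∑ i, lam i * |b₂ (σ i)| := Finset.sum_add_distrib
    _ ≤ owl lam b₁ + owl lam b₂ := add_le_add (sum_mul_abs_comp_perm_le_owl lam hanti b₁ σ)
        (sum_mul_abs_comp_perm_le_owl lam hanti b₂ σ)

lemma mul_abs_le_owl (hm : 0 < m) (hnonneg : ∀ i, 0 ≤ lam i) (b : Fin m → ℝ) (j : Fin m) :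
    lam ⟨0, hm⟩ * |b j| ≤ owl lam b :=
  calc lam ⟨0, hm⟩ * |b j| ≤ lam ⟨0, hm⟩ * sortedAbsDesc b ⟨0, hm⟩ :=
        mul_le_mul_of_nonneg_left (abs_le_sortedAbsDesc_zero hm b j) (hnonneg _)
    _ ≤ owl lam b := Finset.single_le_sum (f := fun i => lam i * sortedAbsDesc b i)
        (fun i _ => mul_nonneg (hnonneg i) (abs_nonneg _)) (Finset.mem_univ _)

lemma eq_zero_of_owl_eq_zero (hm : 0 < m) (hnonneg : ∀ i, 0 ≤ lam i) (hpos : 0 < lam ⟨0, hm⟩)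
    (b : Fin m → ℝ) (hb : owl lam b = 0) : b = 0 := by
  funext j
  have h := mul_abs_le_owl lam hm hnonneg b j
  rw [hb] at h
  exact abs_nonpos_iff.mp (nonpos_of_mul_nonpos_right h hpos)

end OrderedWeightedL1

open OrderedWeightedL1 in
/-- With `lam` nonincreasing, nonnegative and `lam 0 > 0`, the ordered weighted ℓ₁
functional is a norm: absolutely homogeneous, subadditive, and definite. -/
theorem stmt6 {m : ℕ} (hm : 0 < m) (lam : Fin m → ℝ) (hanti : Antitone lam)
    (hnonneg : ∀ i, 0 ≤ lam i) (hpos : 0 < lam ⟨0, hm⟩) :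
    (∀ (c : ℝ) (b : Fin m → ℝ), owl lam (fun i => c * b i) = |c| * owl lam b) ∧
    (∀ b₁ b₂ : Fin m → ℝ, owl lam (b₁ + b₂) ≤ owl lam b₁ + owl lam b₂) ∧
    (∀ b : Fin m → ℝ, owl lam b = 0 → b = 0) :=
  ⟨owl_mul_left lam hanti, owl_add_le lam hanti hnonneg,
    eq_zero_of_owl_eq_zero lam hm hnonneg hpos⟩
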